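/- arXiv:1901.09075 — 3 statements merged into one kernel-verified Lean document; each statement's English description precedes it below -/
import Mathlib

section
/- A partial cube G is a median graph if and only if for every edge ab of G the set U_ab is convex. -/
open SimpleGraph

universe u

variable {V : Type u}

/-- The geodesic interval between two vertices: the set of vertices lying on
shortest paths between them. -/
def gInterval (G : SimpleGraph V) (x y : V) : Set V :=
  {z | G.dist x z + G.dist z y = G.dist x y}

/-- A set of vertices is (geodesically) convex. -/
def GConvex (G : SimpleGraph V) (C : Set V) : Prop :=
  ∀ x ∈ C, ∀ y ∈ C, gInterval G x y ⊆ C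

/-- `Wside G a b` is the set `W_ab` of vertices strictly closer to `a` than to `b`. -/
def Wside (G : SimpleGraph V) (a b : V) : Set V :=
  {x | G.dist a x < G.dist b x}

/-- `Uside G a b` is the set `U_ab` of vertices of `W_ab` having a neighbour in `W_ba`. -/
def Uside (G : SimpleGraph V) (a b : V) : Set V :=
  {x | x ∈ Wside G a b ∧ ∃ y, G.Adj x y ∧ y ∈ Wside G b a}

/-- A graph is bipartite if it admits a proper 2-colouring. -/
def IsBipartiteGraph (G : SimpleGraph V) : Prop :=
  ∃ c : V → Bool, ∀ u v, G.Adj u v → c u ≠ c v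

/-- A partial cube: a connected bipartite graph all of whose half-spaces `W_ab`, `W_ba`
are convex (Djoković's characterization). -/
def IsPartialCube (G : SimpleGraph V) : Prop :=
  G.Connected ∧ IsBipartiteGraph G ∧
    ∀ a b, G.Adj a b → GConvex G (Wside G a b) ∧ GConvex G (Wside G b a)

/-- The Djoković–Winkler relation Θ between (unordered) edges. -/
def ThetaRel (G : SimpleGraph V) (e f : Sym2 V) : Prop :=
  ∃ x y u v : V, e = s(x, y) ∧ f = s(u, v) ∧
    G.dist x u + G.dist y v ≠ G.dist x v + G.dist y u

/-- The geodesic convex hull of a set of vertices. -/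
def gConvexHull (G : SimpleGraph V) (A : Set V) : Set V :=
  ⋂₀ {C : Set V | GConvex G C ∧ A ⊆ C}

/-!
Bipartiteness puts every vertex strictly closer to one end of each edge `ab`, and convexity of
`W_ab` makes all edges between `W_ab` and `W_ba` parallel: a vertex of `W_ab` is exactly one
step closer to their ends in `W_ab`. Medians are unique in any partial cube: a cut separating
two medians would leave two of `u, v, w` on one side, and the convex half-space of that side
would contain both medians.

If medians exist and `y` lies between `x, z ∈ U_ab` with neighbours `x', z' ∈ W_ba`, the median
of `y, x', z'` is a neighbour of `y` in `W_ba`. Conversely, if every `U_ab` is convex, a vertex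
`u ∉ I(v, w)` has a neighbour closer to both `v` and `w`. Replacing `u` by it lowers
`d(u, v) + d(v, w) + d(w, u)` and keeps every median of the new triple a median of the old one,
until `u ∈ I(v, w)` is itself a median.
-/

section

variable {G : SimpleGraph V}

@[simp]
lemma mem_gInterval {x y z : V} : z ∈ gInterval G x y ↔ G.dist x z + G.dist z y = G.dist x y :=
  Iff.rfl

lemma left_mem_gInterval {u v : V} : u ∈ gInterval G u v := by
  simp

lemma right_mem_gInterval {u v : V} : v ∈ gInterval G u v := by
  simp

lemma gInterval_comm (u v : V) : gInterval G u v = gInterval G v u := by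
  ext z
  simp only [mem_gInterval, dist_comm (u := z) (v := u), dist_comm (u := z) (v := v),
    dist_comm (u := u) (v := v)]
  omega

lemma SimpleGraph.Connected.gInterval_subset_gInterval (hconn : G.Connected) {u v t : V}
    (ht : t ∈ gInterval G u v) : gInterval G t v ⊆ gInterval G u v := by
  intro m hm
  rw [mem_gInterval] at ht hm ⊢
  have h₁ : G.dist u m ≤ G.dist u t + G.dist t m := hconn.dist_triangle
  have h₂ : G.dist u v ≤ G.dist u m + G.dist m v := hconn.dist_triangle
  omega

lemma mem_gInterval_of_adj {u v t : V} (hut : G.Adj u t) (ht : G.dist t v + 1 = G.dist u v) :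
    t ∈ gInterval G u v := by
  rw [mem_gInterval, dist_eq_one_iff_adj.mpr hut]
  omega

lemma SimpleGraph.Connected.exists_adj_dist_add_one_eq (hconn : G.Connected) {u v : V}
    (huv : u ≠ v) : ∃ t, G.Adj u t ∧ G.dist t v + 1 = G.dist u v := by
  obtain ⟨p, hp⟩ := hconn.exists_walk_length_eq_dist u v
  cases p with
  | nil => exact absurd rfl huv
  | @cons _ t _ hadj q =>
    refine ⟨t, hadj, le_antisymm ?_ ?_⟩
    · simpa [← hp] using dist_le q
    · calc G.dist u v ≤ G.dist u t + G.dist t v := hconn.dist_triangle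
        _ = G.dist t v + 1 := by rw [dist_eq_one_iff_adj.mpr hadj, add_comm]

@[simp]
lemma mem_Wside {a b x : V} : x ∈ Wside G a b ↔ G.dist a x < G.dist b x :=
  Iff.rfl

lemma left_mem_Wside {a b : V} (hab : G.Adj a b) : a ∈ Wside G a b := by
  simp [dist_eq_one_iff_adj.mpr hab.symm]

lemma notMem_Wside_swap {a b z : V} (hz : z ∈ Wside G a b) : z ∉ Wside G b a := by
  rw [mem_Wside] at hz ⊢
  omega

lemma left_mem_Uside {a b : V} (hab : G.Adj a b) : a ∈ Uside G a b :=
  ⟨left_mem_Wside hab, b, hab, left_mem_Wside hab.symm⟩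

lemma IsBipartiteGraph.dist_ne_of_adj (hbip : IsBipartiteGraph G) (hconn : G.Connected)
    {x y : V} (hxy : G.Adj x y) (z : V) : G.dist z x ≠ G.dist z y := by
  obtain ⟨col, hcol⟩ := hbip
  let c : G.Coloring Bool := Coloring.mk col (hcol _ _)
  obtain ⟨p, hp⟩ := hconn.exists_walk_length_eq_dist z x
  obtain ⟨q, hq⟩ := hconn.exists_walk_length_eq_dist z y
  have hpx := c.even_length_iff_congr p
  have hqy := c.even_length_iff_congr q
  have hxy' := c.valid hxy
  intro h
  rw [hp, h, ← hq, hqy] at hpx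
  cases hx : c x <;> cases hy : c y <;> simp_all

lemma IsBipartiteGraph.dist_eq_add_one_or_eq_add_one (hbip : IsBipartiteGraph G)
    (hconn : G.Connected) {x y : V} (hxy : G.Adj x y) (z : V) :
    G.dist x z = G.dist y z + 1 ∨ G.dist y z = G.dist x z + 1 := by
  have hne := hbip.dist_ne_of_adj hconn hxy z
  rw [dist_comm (u := x), dist_comm (u := y)]
  rcases hxy.diff_dist_adj (u := z) with h | h | h <;> omega

lemma IsBipartiteGraph.mem_Wside_or_mem_Wside (hbip : IsBipartiteGraph G)
    (hconn : G.Connected) {x y : V} (hxy : G.Adj x y) (z : V) :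
    z ∈ Wside G x y ∨ z ∈ Wside G y x := by
  rw [mem_Wside, mem_Wside]
  rcases hbip.dist_eq_add_one_or_eq_add_one hconn hxy z with h | h <;> omega

lemma IsBipartiteGraph.exists_mem_Uside_mem_gInterval (hbip : IsBipartiteGraph G)
    (hconn : G.Connected) {p q z₁ z₂ : V} (hpq : G.Adj p q) (h₁ : z₁ ∈ Wside G p q)
    (h₂ : z₂ ∈ Wside G q p) : ∃ s ∈ Uside G p q, s ∈ gInterval G z₁ z₂ := by
  induction hn : G.dist z₁ z₂ using Nat.strong_induction_on generalizing z₁ with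
  | _ n ih =>
  have hne : z₁ ≠ z₂ := fun h => notMem_Wside_swap h₁ (h ▸ h₂)
  obtain ⟨t, hz₁t, ht⟩ := hconn.exists_adj_dist_add_one_eq hne
  rcases hbip.mem_Wside_or_mem_Wside hconn hpq t with htp | htq
  · obtain ⟨s, hs, hsI⟩ := ih _ (by omega) htp rfl
    exact ⟨s, hs, hconn.gInterval_subset_gInterval (mem_gInterval_of_adj hz₁t ht) hsI⟩
  · exact ⟨z₁, ⟨h₁, t, hz₁t, htq⟩, left_mem_gInterval⟩

def IsMedian (G : SimpleGraph V) (u v w m : V) : Prop :=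
  m ∈ gInterval G u v ∧ m ∈ gInterval G v w ∧ m ∈ gInterval G w u

namespace IsPartialCube

lemma gConvex_Wside (hG : IsPartialCube G) {a b : V} (hab : G.Adj a b) :
    GConvex G (Wside G a b) :=
  (hG.2.2 a b hab).1

lemma dist_eq_dist_add_one_of_adj (hG : IsPartialCube G) {p q s t z : V} (hpq : G.Adj p q)
    (hst : G.Adj s t) (hs : s ∈ Wside G p q) (ht : t ∈ Wside G q p) (hz : z ∈ Wside G p q) :
    G.dist z t = G.dist z s + 1 := by
  rw [dist_comm (u := z), dist_comm (u := z)]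
  refine (hG.2.1.dist_eq_add_one_or_eq_add_one hG.1 hst z).resolve_left fun h => ?_
  have ht_mem : t ∈ gInterval G z s := by
    rw [mem_gInterval, dist_eq_one_iff_adj.mpr hst.symm, dist_comm (u := z) (v := t),
      dist_comm (u := z) (v := s), h]
  exact notMem_Wside_swap (hG.gConvex_Wside hpq z hz s hs ht_mem) ht

lemma exists_adj_forall_dist_add_one_eq_of_mem_Uside (hG : IsPartialCube G) {p q u : V}
    (hpq : G.Adj p q) (hu : u ∈ Uside G p q) :
    ∃ t, G.Adj u t ∧ ∀ v ∈ Wside G q p, G.dist t v + 1 = G.dist u v := by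
  obtain ⟨hu, t, hut, ht⟩ := hu
  refine ⟨t, hut, fun v hv => ?_⟩
  rw [dist_comm (u := t), dist_comm (u := u)]
  exact (hG.dist_eq_dist_add_one_of_adj hpq.symm hut.symm ht hu hv).symm

/-- `u` lies on a geodesic from `a` to the vertex of `U_ab` where a `u`–`w` geodesic crosses
the cut, and both ends are in the convex set `U_ab`. -/
lemma mem_Uside_of_gConvex_Uside (hG : IsPartialCube G) {a b u w : V} (hab : G.Adj a b)
    (hU : GConvex G (Uside G a b)) (hua : G.Adj u a) (hu : u ∈ Wside G a b)
    (hw : w ∈ Wside G b a) (huw : G.dist u w < G.dist a w) : u ∈ Uside G a b := by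
  obtain ⟨s, hsU, hsI⟩ := hG.2.1.exists_mem_Uside_mem_gInterval hG.1 hab hu hw
  have hs : s ∈ Wside G u a :=
    hG.gConvex_Wside hua u (left_mem_Wside hua) w huw hsI
  have hsa : G.dist s a = G.dist s u + 1 :=
    hG.dist_eq_dist_add_one_of_adj hua hua (left_mem_Wside hua) (left_mem_Wside hua.symm) hs
  refine hU a (left_mem_Uside hab) s hsU ?_
  rw [mem_gInterval, dist_eq_one_iff_adj.mpr hua.symm, dist_comm (u := a), hsa,
    dist_comm (u := u)]
  omega

lemma exists_adj_closer_of_notMem_gInterval (hG : IsPartialCube G)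
    (hU : ∀ a b, G.Adj a b → GConvex G (Uside G a b)) {u v w : V}
    (hu : u ∉ gInterval G v w) :
    ∃ t, G.Adj u t ∧ G.dist t v + 1 = G.dist u v ∧ G.dist t w + 1 = G.dist u w := by
  induction hn : G.dist u v using Nat.strong_induction_on generalizing u with
  | _ n ih =>
  subst hn
  have huv : u ≠ v := by
    rintro rfl
    exact hu left_mem_gInterval
  obtain ⟨a, hua, hav⟩ := hG.1.exists_adj_dist_add_one_eq huv
  rcases hG.2.1.dist_eq_add_one_or_eq_add_one hG.1 hua w with huw | haw
  · exact ⟨a, hua, hav, huw.symm⟩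
  have ha : a ∉ gInterval G v w := by
    rw [mem_gInterval, dist_comm (u := v)] at hu ⊢
    omega
  -- the step `u a` moves away from `w`; the edge `a b` given by induction separates `u` from `v, w`
  obtain ⟨b, hab, hbv, hbw⟩ := ih _ (by omega) ha rfl
  have hu_ab : u ∈ Wside G a b := by
    refine (hG.2.1.mem_Wside_or_mem_Wside hG.1 hab u).resolve_right fun h => ?_
    rw [mem_Wside, dist_comm (u := a), dist_eq_one_iff_adj.mpr hua, Nat.lt_one_iff,
      hG.1.dist_eq_zero_iff] at h
    subst h
    omega
  have hv : v ∈ Wside G b a := by rw [mem_Wside]; omega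
  have hw : w ∈ Wside G b a := by rw [mem_Wside]; omega
  have huU := hG.mem_Uside_of_gConvex_Uside hab (hU a b hab) hua hu_ab hw (by omega)
  obtain ⟨t, hut, ht⟩ := hG.exists_adj_forall_dist_add_one_eq_of_mem_Uside hab huU
  exact ⟨t, hut, ht v hv, ht w hw⟩

lemma exists_isMedian (hG : IsPartialCube G) (hU : ∀ a b, G.Adj a b → GConvex G (Uside G a b))
    (u v w : V) : ∃ m, IsMedian G u v w m := by
  induction hn : G.dist u v + G.dist v w + G.dist w u using Nat.strong_induction_on
    generalizing u with
  | _ n ih =>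
  by_cases hu : u ∈ gInterval G v w
  · exact ⟨u, left_mem_gInterval, hu, right_mem_gInterval⟩
  obtain ⟨t, hut, htv, htw⟩ := hG.exists_adj_closer_of_notMem_gInterval hU hu
  have hwt : G.dist w t + 1 = G.dist w u := by rwa [dist_comm (u := w), dist_comm (u := w)]
  obtain ⟨m, hmtv, hmvw, hmwt⟩ := ih _ (by omega) t rfl
  refine ⟨m, hG.1.gInterval_subset_gInterval (mem_gInterval_of_adj hut htv) hmtv, hmvw, ?_⟩
  rw [gInterval_comm] at hmwt ⊢
  exact hG.1.gInterval_subset_gInterval (mem_gInterval_of_adj hut htw) hmwt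

lemma mem_Wside_iff_mem_Wside_of_mem_gInterval (hG : IsPartialCube G) {p q m₁ m₂ z₁ z₂ : V}
    (hpq : G.Adj p q) (h₁ : m₁ ∈ Wside G p q) (h₂ : m₂ ∈ Wside G q p)
    (hm₁ : m₁ ∈ gInterval G z₁ z₂) (hm₂ : m₂ ∈ gInterval G z₁ z₂) :
    z₁ ∈ Wside G p q ↔ z₂ ∈ Wside G q p := by
  have hside := hG.2.1.mem_Wside_or_mem_Wside hG.1 hpq
  constructor
  · intro hz₁
    refine (hside z₂).resolve_left fun hz₂ => ?_
    exact notMem_Wside_swap (hG.gConvex_Wside hpq z₁ hz₁ z₂ hz₂ hm₂) h₂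
  · intro hz₂
    refine (hside z₁).resolve_right fun hz₁ => ?_
    exact notMem_Wside_swap (hG.gConvex_Wside hpq.symm z₁ hz₁ z₂ hz₂ hm₁) h₁

/-- Each pair among `u, v, w` would have to be split by the cut between `m₁` and a neighbour
towards `m₂`, which is impossible for three vertices and two sides. -/
lemma isMedian_unique (hG : IsPartialCube G) {u v w m₁ m₂ : V} (h₁ : IsMedian G u v w m₁)
    (h₂ : IsMedian G u v w m₂) : m₁ = m₂ := by
  by_contra hne
  obtain ⟨y, hy, hym₂⟩ := hG.1.exists_adj_dist_add_one_eq hne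
  have hm₁ : m₁ ∈ Wside G m₁ y := left_mem_Wside hy
  have hm₂ : m₂ ∈ Wside G y m₁ := by rw [mem_Wside]; omega
  have huv := hG.mem_Wside_iff_mem_Wside_of_mem_gInterval hy hm₁ hm₂ h₁.1 h₂.1
  have hvw := hG.mem_Wside_iff_mem_Wside_of_mem_gInterval hy hm₁ hm₂ h₁.2.1 h₂.2.1
  have hwu := hG.mem_Wside_iff_mem_Wside_of_mem_gInterval hy hm₁ hm₂ h₁.2.2 h₂.2.2
  have hside := hG.2.1.mem_Wside_or_mem_Wside hG.1 hy
  have hdisj : ∀ z, z ∈ Wside G m₁ y → z ∉ Wside G y m₁ := fun z => notMem_Wside_swap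
  have := hside u; have := hside v; have := hside w
  have := hdisj u; have := hdisj v; have := hdisj w
  tauto

lemma gConvex_Uside_of_exists_isMedian (hG : IsPartialCube G)
    (hmed : ∀ u v w, ∃ m, IsMedian G u v w m) {a b : V} (hab : G.Adj a b) :
    GConvex G (Uside G a b) := by
  rintro x ⟨hx, x', hxx', hx'⟩ z ⟨hz, z', hzz', hz'⟩ y hy
  have hyW : y ∈ Wside G a b := hG.gConvex_Wside hab x hx z hz hy
  obtain ⟨m, hm₁, hm₂, hm₃⟩ := hmed y x' z'
  refine ⟨hyW, m, ?_, hG.gConvex_Wside hab.symm x' hx' z' hz' hm₂⟩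
  have hyx' := hG.dist_eq_dist_add_one_of_adj hab hxx' hx hx' hyW
  have hyz' := hG.dist_eq_dist_add_one_of_adj hab hzz' hz hz' hyW
  have hzx' := hG.dist_eq_dist_add_one_of_adj hab hxx' hx hx' hz
  have hx'z := hG.dist_eq_dist_add_one_of_adj hab.symm hzz'.symm hz' hz hx'
  rw [mem_gInterval] at hy hm₁ hm₂ hm₃
  rw [← dist_eq_one_iff_adj]
  -- adding the three interval equations for `m` gives `2 * d(y, m) = 2`
  have := dist_comm (G := G) (u := x') (v := z)
  have := dist_comm (G := G) (u := z) (v := x)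
  have := dist_comm (G := G) (u := x) (v := y)
  have := dist_comm (G := G) (u := x') (v := m)
  have := dist_comm (G := G) (u := z') (v := m)
  have := dist_comm (G := G) (u := z') (v := y)
  have := dist_comm (G := G) (u := y) (v := m)
  omega

end IsPartialCube

end

/-- A partial cube is a median graph iff `U_ab` is convex for every edge. -/
theorem stmt_11 (G : SimpleGraph V) (hG : IsPartialCube G) :
    (∀ u v w : V, ∃! m : V,
        m ∈ gInterval G u v ∧ m ∈ gInterval G v w ∧ m ∈ gInterval G w u) ↔
      (∀ a b, G.Adj a b → GConvex G (Uside G a b)) := by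
  constructor
  · intro hmed a b hab
    exact hG.gConvex_Uside_of_exists_isMedian (fun u v w => (hmed u v w).exists) hab
  · intro hU u v w
    obtain ⟨m, hm⟩ := hG.exists_isMedian hU u v w
    exact ⟨m, hm, fun m' hm' => hG.isMedian_unique hm' hm⟩
end

section
/- A finite partial cube with more than one vertex is peripheral (every vertex lies in some periphery W_ab with W_ab = U_ab) if and only if it is isomorphic to the Cartesian product of a partial cube with K_2. -/
/-!
If `G ≅ H □ K₂`, then for a vertex `x` with twin `x'` in the other layer, `W_{xx'}` is the layer
of `x`, and every vertex of that layer is adjacent to its twin, so `G` is peripheral.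

Conversely, in a partial cube an edge `wy` with `w ∈ W_ab`, `y ∈ W_ba` satisfies `W_wy = W_ab`.
Take a vertex `w` avoiding as many peripheries `W_pq` as possible, a periphery `W_ab ∋ w` and the
neighbour `y ∈ W_ba` of `w`. If `y` lay in a periphery `W_pq` avoided by `w`, the edge `wy` would
give `W_pq = W_ba`, so `W_ba` would be a periphery too; otherwise `y` avoids all peripheries
avoided by `w` and also `W_ab`, contradicting maximality. So some edge `ab` has both `W_ab` and
`W_ba` peripheries. The edges between them then form a perfect matching, and convexity of the
half-spaces makes it an isomorphism `G[W_ab] ≅ G[W_ba]`; hence `G ≅ G[W_ab] □ K₂`, and `G[W_ab]`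
is a partial cube because `W_ab` is convex.
-/

open SimpleGraph

universe u

variable {V : Type u}

namespace SimpleGraph

variable {W : Type*} {G : SimpleGraph V} {G' : SimpleGraph W} {x y : V}

lemma Hom.edist_le (f : G →g G') (u v : V) : G'.edist (f u) (f v) ≤ G.edist u v := by
  by_cases hr : G.Reachable u v
  · obtain ⟨p, hp⟩ := hr.exists_walk_length_eq_edist
    rw [← hp, ← p.length_map f]
    exact SimpleGraph.edist_le _
  · rw [edist_eq_top_of_not_reachable hr]
    exact le_top

lemma Iso.edist_eq (e : G ≃g G') (u v : V) : G'.edist (e u) (e v) = G.edist u v :=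
  le_antisymm (e.toHom.edist_le u v) (by simpa using e.symm.toHom.edist_le (e u) (e v))

lemma Iso.dist_eq (e : G ≃g G') (u v : V) : G'.dist (e u) (e v) = G.dist u v :=
  congrArg ENat.toNat (e.edist_eq u v)

lemma Connected.dist_boxProd {H : SimpleGraph W} (hG : G.Connected) (hH : H.Connected)
    (p q : V × W) : (G □ H).dist p q = G.dist p.1 q.1 + H.dist p.2 q.2 := by
  have h := edist_boxProd (G := G) (H := H) p q
  rw [← (hG p.1 q.1).coe_dist_eq_edist, ← (hH p.2 q.2).coe_dist_eq_edist,
    ← (hG.boxProd hH p q).coe_dist_eq_edist] at h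
  exact_mod_cast h

lemma Walk.mem_gInterval_of_mem_support (p : G.Walk x y) (hp : p.length = G.dist x y)
    {z : V} (hz : z ∈ p.support) : z ∈ gInterval G x y := by
  classical
  have hlen : (p.takeUntil z hz).length + (p.dropUntil z hz).length = p.length := by
    rw [← Walk.length_append, p.take_spec hz]
  have h1 : G.dist x z ≤ (p.takeUntil z hz).length := dist_le _
  have h2 : G.dist z y ≤ (p.dropUntil z hz).length := dist_le _
  have h3 := (p.takeUntil z hz).reachable.dist_triangle_left y
  simp only [gInterval, Set.mem_ofPred_eq]
  omega

lemma Iso.preimage_Wside (e : G ≃g G') (a b : V) :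
    e ⁻¹' Wside G' (e a) (e b) = Wside G a b := by
  ext x
  simp only [Set.mem_preimage, Wside, Set.mem_ofPred_eq, e.dist_eq]

lemma nonempty_iso_induce_boxProd_of_matching {s : Set V} (f : s ≃ ↥sᶜ)
    (hf : ∀ x : s, G.Adj x (f x)) (hcross : ∀ (x : s) (y : ↥sᶜ), G.Adj x y → y = f x)
    (hf_adj : ∀ x x' : s, G.Adj (f x) (f x') ↔ G.Adj x x') :
    Nonempty (G ≃g G.induce s □ (⊤ : SimpleGraph (Fin 2))) := by
  classical
  let e : s × Fin 2 ≃ V :=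
    { toFun := fun p => if p.2 = 0 then p.1 else f p.1
      invFun := fun v => if h : v ∈ s then (⟨v, h⟩, 0) else (f.symm ⟨v, h⟩, 1)
      left_inv := by
        rintro ⟨x, i⟩
        fin_cases i <;> simp [show (f x : V) ∉ s from (f x).2]
      right_inv := by
        intro v
        by_cases h : v ∈ s <;> simp [h] }
  have hf_iff (x y : s) : G.Adj x (f y) ↔ x = y :=
    ⟨fun h => f.injective (hcross x (f y) h).symm, by rintro rfl; exact hf x⟩
  have hf_iff' (x y : s) : G.Adj (f x) y ↔ x = y := by rw [G.adj_comm, hf_iff, eq_comm]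
  refine ⟨(RelIso.mk e ?_).symm⟩
  rintro ⟨x, i⟩ ⟨y, j⟩
  fin_cases i <;> fin_cases j <;> simp [e, boxProd_adj, hf_iff, hf_iff', hf_adj]

end SimpleGraph

section

variable {W : Type*} {G : SimpleGraph V} {G' : SimpleGraph W} {a b x y : V}

lemma IsBipartiteGraph.dist_eq_add_one_or (hbip : IsBipartiteGraph G) (hconn : G.Connected)
    (hab : G.Adj a b) (x : V) :
    G.dist a x = G.dist b x + 1 ∨ G.dist b x = G.dist a x + 1 := by
  obtain ⟨c, hc⟩ := hbip
  let c' : G.Coloring Bool := Coloring.mk c fun h => hc _ _ h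
  obtain ⟨p, hp⟩ := hconn.exists_walk_length_eq_dist a x
  obtain ⟨q, hq⟩ := hconn.exists_walk_length_eq_dist b x
  have hpar : G.dist a x ≠ G.dist b x := by
    intro h
    have hpq := c'.even_length_iff_congr p
    rw [hp, h, ← hq, c'.even_length_iff_congr q] at hpq
    have := c'.valid hab
    revert hpq this
    cases c' a <;> cases c' b <;> cases c' x <;> decide
  have := hab.diff_dist_adj (u := x)
  rw [dist_comm (u := x), dist_comm (u := x)] at this
  omega

lemma IsBipartiteGraph.compl_Wside (hbip : IsBipartiteGraph G) (hconn : G.Connected)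
    (hab : G.Adj a b) :
    (Wside G a b)ᶜ = Wside G b a := by
  ext x
  have := hbip.dist_eq_add_one_or hconn hab x
  simp only [Set.mem_compl_iff, Wside, Set.mem_ofPred_eq]
  omega

lemma notMem_Wside_of_mem (hx : x ∈ Wside G a b) : x ∉ Wside G b a :=
  fun hx' => (lt_asymm hx : ¬G.dist b x < G.dist a x) hx'

lemma mem_Wside_self (hab : G.Adj a b) : a ∈ Wside G a b := by
  simp [Wside, dist_eq_one_iff_adj.mpr hab.symm]

section Convex

variable {s : Set V}

lemma GConvex.edist_induce (hs : GConvex G s) (hconn : G.Connected) (x y : s) :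
    (G.induce s).edist x y = G.edist x y := by
  refine le_antisymm ?_ ((Embedding.induce s).toHom.edist_le x y)
  obtain ⟨p, hp⟩ := hconn.exists_walk_length_eq_dist x y
  have hsupp : ∀ z ∈ p.support, z ∈ s := fun z hz =>
    hs x x.2 y y.2 (p.mem_gInterval_of_mem_support hp hz)
  have hlen : (p.induce s hsupp).length = p.length := by
    have h := congrArg Walk.length (p.map_induce hsupp)
    rwa [Walk.length_map] at h
  calc (G.induce s).edist x y ≤ (p.induce s hsupp).length := SimpleGraph.edist_le _
    _ = G.edist x y := by rw [hlen, hp, (hconn x y).coe_dist_eq_edist]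

lemma GConvex.dist_induce (hs : GConvex G s) (hconn : G.Connected) (x y : s) :
    (G.induce s).dist x y = G.dist x y :=
  congrArg ENat.toNat (hs.edist_induce hconn x y)

lemma GConvex.preimage_val (hs : GConvex G s) (hconn : G.Connected) {C : Set V}
    (hC : GConvex G C) : GConvex (G.induce s) (Subtype.val ⁻¹' C) := by
  intro x hx y hy z hz
  simp only [gInterval, Set.mem_ofPred_eq, hs.dist_induce hconn] at hz
  exact hC x hx y hy hz

lemma IsPartialCube.induce (hG : IsPartialCube G) (hs : GConvex G s) (hne : s.Nonempty) :
    IsPartialCube (G.induce s) := by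
  obtain ⟨hconn, ⟨c, hc⟩, hcvx⟩ := hG
  have : Nonempty s := hne.to_subtype
  have hWside : ∀ u v : s, Wside (G.induce s) u v = Subtype.val ⁻¹' Wside G u v := by
    intro u v
    ext z
    simp only [Wside, Set.mem_ofPred_eq, Set.mem_preimage, hs.dist_induce hconn]
  refine ⟨⟨fun x y => reachable_of_edist_ne_top ?_⟩,
    ⟨c ∘ Subtype.val, fun u v huv => hc u v huv⟩, fun u v huv => ?_⟩
  · rw [hs.edist_induce hconn]
    exact edist_ne_top_iff_reachable.mpr (hconn x y)
  · rw [hWside, hWside]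
    exact ⟨hs.preimage_val hconn (hcvx u v huv).1, hs.preimage_val hconn (hcvx u v huv).2⟩

end Convex

def IsPeriphery (G : SimpleGraph V) (a b : V) : Prop :=
  Wside G a b = Uside G a b

def IsPeripheral (G : SimpleGraph V) : Prop :=
  ∀ x : V, ∃ a b, G.Adj a b ∧ x ∈ Wside G a b ∧ IsPeriphery G a b

lemma isPeriphery_iff :
    IsPeriphery G a b ↔ ∀ x ∈ Wside G a b, ∃ y, G.Adj x y ∧ y ∈ Wside G b a :=
  ⟨fun h x hx => (h ▸ hx : x ∈ Uside G a b).2,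
    fun h => Set.Subset.antisymm (fun x hx => ⟨hx, h x hx⟩) fun _ hx => hx.1⟩

lemma IsPeripheral.of_iso (h : IsPeripheral G') (e : G ≃g G') : IsPeripheral G := by
  intro x
  obtain ⟨a', b', hab, hx, hper⟩ := h (e x)
  obtain ⟨a, rfl⟩ := e.surjective a'
  obtain ⟨b, rfl⟩ := e.surjective b'
  refine ⟨a, b, e.map_adj_iff.mp hab, e.preimage_Wside a b ▸ hx, isPeriphery_iff.mpr ?_⟩
  intro z hz
  obtain ⟨y', hzy, hy⟩ := isPeriphery_iff.mp hper (e z)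
    (Set.mem_preimage.mp ((e.preimage_Wside a b).symm ▸ hz))
  obtain ⟨y, rfl⟩ := e.surjective y'
  exact ⟨y, e.map_adj_iff.mp hzy, e.preimage_Wside b a ▸ hy⟩

section BoxProd

variable {α : Type*} {H : SimpleGraph W}

lemma Wside_boxProd_top (hH : H.Connected) (h : W) {i j : α} (hij : i ≠ j) :
    Wside (H □ ⊤) (h, i) (h, j) = {q | q.2 = i} := by
  classical
  have : Nonempty α := ⟨i⟩
  ext ⟨h', k⟩
  simp only [Wside, Set.mem_ofPred_eq, hH.dist_boxProd connected_top, dist_top]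
  split_ifs <;> grind

lemma isPeripheral_boxProd_top [Nontrivial α] (hH : H.Connected) :
    IsPeripheral (H □ (⊤ : SimpleGraph α)) := by
  rintro ⟨h, i⟩
  obtain ⟨j, hji⟩ := exists_ne i
  refine ⟨(h, i), (h, j), boxProd_adj_right.mpr hji.symm,
    by simp [Wside_boxProd_top hH h hji.symm], isPeriphery_iff.mpr ?_⟩
  rw [Wside_boxProd_top hH h hji.symm, Wside_boxProd_top hH h hji]
  rintro ⟨h', k⟩ rfl
  exact ⟨(h', j), boxProd_adj_right.mpr hji.symm, rfl⟩

end BoxProd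

namespace IsPartialCube

variable {w x' y' : V}

lemma eq_of_adj_of_adj (hG : IsPartialCube G) (hab : G.Adj a b) (hx : x ∈ Wside G a b)
    (hx' : x' ∈ Wside G a b) (hy : y ∈ Wside G b a) (hxy : G.Adj x y) (hx'y : G.Adj x' y) :
    x = x' := by
  obtain ⟨hconn, hbip, hcvx⟩ := hG
  by_contra hne
  have h := hbip.dist_eq_add_one_or hconn hxy x'
  have hyx' : G.dist y x' = 1 := dist_eq_one_iff_adj.mpr hx'y.symm
  have hpos := hconn.pos_dist_of_ne hne
  have hyI : y ∈ gInterval G x x' := by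
    simp only [gInterval, Set.mem_ofPred_eq, dist_eq_one_iff_adj.mpr hxy, hyx']
    omega
  exact notMem_Wside_of_mem hy ((hcvx a b hab).1 x hx x' hx' hyI)

lemma adj_of_adj_of_adj (hG : IsPartialCube G) (hab : G.Adj a b) (hx : x ∈ Wside G a b)
    (hx' : x' ∈ Wside G a b) (hy : y ∈ Wside G b a) (hy' : y' ∈ Wside G b a)
    (hxy : G.Adj x y) (hx'y' : G.Adj x' y') (hxx' : G.Adj x x') : G.Adj y y' := by
  obtain ⟨hconn, hbip, hcvx⟩ := hG
  have hxy' := hbip.dist_eq_add_one_or hconn hxx' y'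
  have hyx' := hbip.dist_eq_add_one_or hconn hxy.symm x'
  have hyy' := hbip.dist_eq_add_one_or hconn hxy.symm y'
  have hx'y'1 : G.dist x' y' = 1 := dist_eq_one_iff_adj.mpr hx'y'
  have hxx'1 : G.dist x x' = 1 := dist_eq_one_iff_adj.mpr hxx'
  have hxy'0 : 0 < G.dist x y' :=
    hconn.pos_dist_of_ne (by rintro rfl; exact notMem_Wside_of_mem hx hy')
  have hyx'0 : 0 < G.dist y x' :=
    hconn.pos_dist_of_ne (by rintro rfl; exact notMem_Wside_of_mem hx' hy)
  rw [← dist_eq_one_iff_adj]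
  by_contra hne
  have hx'I : x' ∈ gInterval G y y' := by
    simp only [gInterval, Set.mem_ofPred_eq]
    omega
  exact notMem_Wside_of_mem hx' ((hcvx a b hab).2 y hy y' hy' hx'I)

lemma Wside_subset_of_adj (hG : IsPartialCube G) (hab : G.Adj a b) (hwy : G.Adj w y)
    (hw : w ∈ Wside G a b) (hy : y ∈ Wside G b a) : Wside G w y ⊆ Wside G a b := by
  obtain ⟨hconn, hbip, hcvx⟩ := hG
  intro x hx
  rw [← hbip.compl_Wside hconn hab.symm]
  intro hxba
  have hwI : w ∈ gInterval G y x := by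
    have := hbip.dist_eq_add_one_or hconn hwy x
    simp only [gInterval, Wside, Set.mem_ofPred_eq] at hx ⊢
    rw [dist_eq_one_iff_adj.mpr hwy.symm]
    omega
  exact notMem_Wside_of_mem hw ((hcvx a b hab).2 y hy x hxba hwI)

lemma Wside_eq_of_adj (hG : IsPartialCube G) (hab : G.Adj a b) (hwy : G.Adj w y)
    (hw : w ∈ Wside G a b) (hy : y ∈ Wside G b a) : Wside G w y = Wside G a b := by
  have hcompl := Set.compl_subset_compl.mpr (hG.Wside_subset_of_adj hab.symm hwy.symm hy hw)
  rw [hG.2.1.compl_Wside hG.1 hab.symm, hG.2.1.compl_Wside hG.1 hwy.symm] at hcompl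
  exact (hG.Wside_subset_of_adj hab hwy hw hy).antisymm hcompl

end IsPartialCube

def peripheriesAvoiding (G : SimpleGraph V) (w : V) : Set (V × V) :=
  {p | G.Adj p.1 p.2 ∧ IsPeriphery G p.1 p.2 ∧ w ∉ Wside G p.1 p.2}

lemma IsPartialCube.peripheriesAvoiding_ssubset (hG : IsPartialCube G)
    (hno : ∀ a b, G.Adj a b → IsPeriphery G a b → ¬IsPeriphery G b a) {w : V}
    (hab : G.Adj a b) (hper : IsPeriphery G a b) (hw : w ∈ Wside G a b) (hwy : G.Adj w y)
    (hy : y ∈ Wside G b a) : peripheriesAvoiding G w ⊂ peripheriesAvoiding G y := by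
  obtain ⟨hconn, hbip, -⟩ := id hG
  refine Set.ssubset_iff_subset_ne.mpr ⟨?_, fun h => ?_⟩
  · rintro ⟨p, q⟩ ⟨hpq, hper_pq, hwp⟩
    refine ⟨hpq, hper_pq, fun hyp => hno a b hab hper ?_⟩
    have hwq : w ∈ Wside G q p := by rwa [← hbip.compl_Wside hconn hpq]
    have hqp : Wside G q p = Wside G a b :=
      (hG.Wside_eq_of_adj hpq.symm hwy hwq hyp).symm.trans (hG.Wside_eq_of_adj hab hwy hw hy)
    have hpq' : Wside G p q = Wside G b a := by
      rw [← hbip.compl_Wside hconn hpq.symm, hqp, hbip.compl_Wside hconn hab]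
    simpa only [IsPeriphery, Uside, hqp, hpq'] using hper_pq
  · have hab_y : (a, b) ∈ peripheriesAvoiding G y := ⟨hab, hper, notMem_Wside_of_mem hy⟩
    exact (h ▸ hab_y : (a, b) ∈ peripheriesAvoiding G w).2.2 hw

lemma IsPartialCube.exists_isPeriphery_pair [Finite V] (hG : IsPartialCube G)
    (hper : IsPeripheral G) : ∃ a b, G.Adj a b ∧ IsPeriphery G a b ∧ IsPeriphery G b a := by
  by_contra! hno
  have : Nonempty V := hG.1.nonempty
  obtain ⟨w, hw⟩ := Finite.exists_max fun w => (peripheriesAvoiding G w).ncard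
  obtain ⟨a, b, hab, hwab, hper_ab⟩ := hper w
  obtain ⟨y, hwy, hy⟩ := isPeriphery_iff.mp hper_ab w hwab
  exact (hw y).not_gt <| Set.ncard_lt_ncard
    (hG.peripheriesAvoiding_ssubset hno hab hper_ab hwab hwy hy) (Set.toFinite _)

lemma IsPartialCube.nonempty_iso_induce_boxProd (hG : IsPartialCube G) (hab : G.Adj a b)
    (hper_ab : IsPeriphery G a b) (hper_ba : IsPeriphery G b a) :
    Nonempty (G ≃g G.induce (Wside G a b) □ (⊤ : SimpleGraph (Fin 2))) := by
  set s := Wside G a b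
  have hcompl : sᶜ = Wside G b a := hG.2.1.compl_Wside hG.1 hab
  have hnbr (x : s) : ∃ y : ↥sᶜ, G.Adj x y := by
    obtain ⟨y, hxy, hy⟩ := isPeriphery_iff.mp hper_ab x x.2
    exact ⟨⟨y, hcompl ▸ hy⟩, hxy⟩
  choose g hg using hnbr
  have hg_mem (x : s) : (g x : V) ∈ Wside G b a := hcompl ▸ (g x).2
  have hg_unique (x : s) (y : ↥sᶜ) (hxy : G.Adj x y) : y = g x :=
    Subtype.ext <|
      hG.eq_of_adj_of_adj hab.symm (hcompl ▸ y.2) (hg_mem x) x.2 hxy.symm (hg x).symm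
  have hg_bij : Function.Bijective g := by
    refine ⟨fun x x' h => Subtype.ext
      (hG.eq_of_adj_of_adj hab x.2 x'.2 (hg_mem x) (hg x) (h ▸ hg x')), fun y => ?_⟩
    obtain ⟨x, hyx, hx⟩ := isPeriphery_iff.mp hper_ba y (hcompl ▸ y.2)
    exact ⟨⟨x, hx⟩, (hg_unique ⟨x, hx⟩ y hyx.symm).symm⟩
  refine nonempty_iso_induce_boxProd_of_matching (Equiv.ofBijective g hg_bij) hg hg_unique
    fun x x' => ⟨fun h => ?_, fun h => ?_⟩
  · exact hG.adj_of_adj_of_adj hab.symm (hg_mem x) (hg_mem x') x.2 x'.2 (hg x).symm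
      (hg x').symm h
  · exact hG.adj_of_adj_of_adj hab x.2 x'.2 (hg_mem x) (hg_mem x') (hg x) (hg x') h

end

theorem stmt_12_general (G : SimpleGraph V) [Fintype V] (hG : IsPartialCube G) :
    (∀ x : V, ∃ a b, G.Adj a b ∧ x ∈ Wside G a b ∧ Wside G a b = Uside G a b) ↔
      ∃ (W' : Type u) (H : SimpleGraph W'), IsPartialCube H ∧
        Nonempty (G ≃g H.boxProd (⊤ : SimpleGraph (Fin 2))) := by
  change IsPeripheral G ↔ _
  constructor
  · intro hper
    obtain ⟨a, b, hab, hper_ab, hper_ba⟩ := hG.exists_isPeriphery_pair hper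
    exact ⟨_, _, hG.induce (hG.2.2 a b hab).1 ⟨a, mem_Wside_self hab⟩,
      hG.nonempty_iso_induce_boxProd hab hper_ab hper_ba⟩
  · rintro ⟨_, _, hH, ⟨e⟩⟩
    exact (isPeripheral_boxProd_top hH.1).of_iso e

/-- A finite partial cube with more than one vertex is peripheral iff it is
isomorphic to the Cartesian product of a partial cube with `K₂`. -/
theorem stmt_12 (G : SimpleGraph V) [Fintype V] (hG : IsPartialCube G)
    (hcard : 1 < Fintype.card V) :
    (∀ x : V, ∃ a b, G.Adj a b ∧ x ∈ Wside G a b ∧ Wside G a b = Uside G a b) ↔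
      ∃ (W' : Type u) (H : SimpleGraph W'), IsPartialCube H ∧
        Nonempty (G ≃g H.boxProd (⊤ : SimpleGraph (Fin 2))) :=
  stmt_12_general G hG
end

section
/- Let G be a finite median graph. Then the alternating sum over n of (-1)^n times the number of n-dimensional hypercube subgraphs of G equals 1. -/
open SimpleGraph

universe u

variable {V : Type u}

/-- The hypercube of dimension `n`: vertices are functions `Fin n → Bool`,
adjacent iff they differ in exactly one coordinate. -/
def cubeGraph (n : ℕ) : SimpleGraph (Fin n → Bool) where
  Adj x y := ∃! i, x i ≠ y i
  symm := by
    constructor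
    rintro x y ⟨i, hi, hu⟩
    exact ⟨i, hi.symm, fun j hj => hu j hj.symm⟩
  loopless := by
    constructor
    rintro x ⟨i, hi, -⟩
    exact hi rfl

/-- The number of `n`-cube subgraphs of `G` (vertex subsets inducing a graph
isomorphic to the `n`-dimensional hypercube). -/
noncomputable def numCubes (G : SimpleGraph V) [Fintype V] (n : ℕ) : ℕ :=
  Nat.card {s : Finset V // Nonempty ((G.induce (↑s : Set V)) ≃g cubeGraph n)}

/-!
Fix a base vertex `z` and grade the vertices by their distance to `z`. In a median graph the
endpoints of an edge lie on consecutive levels, and in every cube the vertex farthest from `z`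
(its apex `u`) is unique, with the cube vertex `x` lying `|x|` levels below it. A cube is
determined by its apex and its `n` edges at the apex, and conversely any `n` lower neighbours
of `u` span a cube with apex `u`, built one dimension at a time by taking medians with `z`.
Hence `α_n = ∑ᵤ C(d(u), n)` with `d(u)` the number of lower neighbours of `u`, and the
alternating sum counts the vertices without lower neighbours, that is, the single vertex `z`.
-/

section Cube

variable {ι : Type*} [DecidableEq ι]

/-- `Bool` is a Boolean ring with `+ = xor`, so this flips the `i`-th coordinate. -/
def toggle (x : ι → Bool) (i : ι) : ι → Bool := x + Pi.single i 1

lemma toggle_apply_self (x : ι → Bool) (i : ι) : toggle x i i = !x i := by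
  simp only [toggle, Pi.add_apply, Pi.single_eq_same]
  cases x i <;> rfl

lemma toggle_apply_self_eq_iff (x b : ι → Bool) (i : ι) :
    toggle x i i = b i ↔ x i ≠ b i := by
  rw [toggle_apply_self]
  cases x i <;> cases b i <;> decide

lemma toggle_apply_of_ne (x : ι → Bool) {i j : ι} (h : j ≠ i) : toggle x i j = x j := by
  simp only [toggle, Pi.add_apply, Pi.single_eq_of_ne h]
  exact add_zero _

lemma toggle_toggle (x : ι → Bool) (i : ι) : toggle (toggle x i) i = x := by
  rw [toggle, toggle, add_assoc, ← Pi.single_add, BooleanRing.add_self, Pi.single_zero, add_zero]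

lemma toggle_comm (x : ι → Bool) (i j : ι) : toggle (toggle x i) j = toggle (toggle x j) i :=
  add_right_comm _ _ _

lemma toggle_injective (x : ι → Bool) : Function.Injective (toggle x) := by
  intro i j h
  by_contra hij
  have := congrFun h i
  rw [toggle_apply_self, toggle_apply_of_ne x hij] at this
  cases hx : x i <;> simp [hx] at this

lemma toggle_zero_cons {n : ℕ} (a : Bool) (x : Fin n → Bool) :
    toggle (Fin.cons a x : Fin (n + 1) → Bool) 0 = Fin.cons (!a) x := by
  funext k
  refine Fin.cases ?_ (fun l => ?_) k
  · simp [toggle_apply_self]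
  · simp [toggle_apply_of_ne _ (Fin.succ_ne_zero l)]

lemma toggle_succ_cons {n : ℕ} (a : Bool) (x : Fin n → Bool) (i : Fin n) :
    toggle (Fin.cons a x : Fin (n + 1) → Bool) i.succ = Fin.cons a (toggle x i) := by
  funext k
  refine Fin.cases ?_ (fun l => ?_) k
  · simp [toggle_apply_of_ne _ (Fin.succ_ne_zero i).symm]
  · rcases eq_or_ne l i with rfl | hl
    · simp [toggle_apply_self]
    · simp [toggle_apply_of_ne _ hl, toggle_apply_of_ne _ ((Fin.succ_injective _).ne hl)]

variable [Fintype ι]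

omit [DecidableEq ι] in
lemma hammingDist_add_right (x y t : ι → Bool) :
    hammingDist (x + t) (y + t) = hammingDist x y :=
  hammingDist_comp (fun i a => a + t i) fun i => add_left_injective (t i)

lemma hammingDist_toggle_of_ne {x b : ι → Bool} {i : ι} (h : x i ≠ b i) :
    hammingDist (toggle x i) b + 1 = hammingDist x b := by
  have : ({j | toggle x i j ≠ b j} : Finset ι) = ({j | x j ≠ b j} : Finset ι).erase i := by
    ext j
    rcases eq_or_ne j i with rfl | hj
    · simp only [toggle_apply_self, Finset.mem_filter_univ, Finset.mem_erase]
      revert h; cases x j <;> cases b j <;> simp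
    · simp [toggle_apply_of_ne x hj, hj]
  rw [hammingDist, hammingDist, this, Finset.card_erase_add_one (by simpa using h)]

lemma hammingDist_toggle_of_eq {x b : ι → Bool} {i : ι} (h : x i = b i) :
    hammingDist (toggle x i) b = hammingDist x b + 1 := by
  have : ({j | toggle x i j ≠ b j} : Finset ι) = insert i ({j | x j ≠ b j} : Finset ι) := by
    ext j
    rcases eq_or_ne j i with rfl | hj
    · simp [toggle_apply_self, h]
    · simp [toggle_apply_of_ne x hj, hj]
  rw [hammingDist, hammingDist, this, Finset.card_insert_of_notMem (by simpa using h)]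

lemma hammingDist_toggle_toggle_of_ne {x b : ι → Bool} {i j : ι} (hij : i ≠ j)
    (hi : x i ≠ b i) (hj : x j ≠ b j) :
    hammingDist (toggle (toggle x i) j) b + 2 = hammingDist x b := by
  have := hammingDist_toggle_of_ne hi
  have := hammingDist_toggle_of_ne (x := toggle x i) (i := j)
    (by rwa [toggle_apply_of_ne x (Ne.symm hij)])
  omega

lemma hammingDist_toggle_left (x : ι → Bool) (i : ι) : hammingDist (toggle x i) x = 1 := by
  simpa using hammingDist_toggle_of_eq (x := x) (b := x) (i := i) rfl

lemma hammingDist_toggle_toggle (x : ι → Bool) {i j : ι} (h : i ≠ j) :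
    hammingDist (toggle x i) (toggle x j) = 2 := by
  rw [hammingDist_toggle_of_eq (toggle_apply_of_ne x h).symm, hammingDist_comm,
    hammingDist_toggle_left]

lemma hammingDist_eq_one_iff {x y : ι → Bool} :
    hammingDist x y = 1 ↔ ∃ i, y = toggle x i := by
  constructor
  · intro h
    obtain ⟨i, hi, hu⟩ := (Fintype.existsUnique_iff_card_one _).2 h
    refine ⟨i, funext fun j => ?_⟩
    rcases eq_or_ne j i with rfl | hj
    · rw [toggle_apply_self]
      revert hi; cases x j <;> cases y j <;> simp
    · rw [toggle_apply_of_ne x hj]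
      by_contra hne
      exact hj (hu j (Ne.symm hne))
  · rintro ⟨i, rfl⟩
    rw [hammingDist_comm, hammingDist_toggle_left]

lemma hammingDist_cons {n : ℕ} (a b : Bool) (x y : Fin n → Bool) :
    hammingDist (Fin.cons a x : Fin (n + 1) → Bool) (Fin.cons b y) =
      (if a = b then 0 else 1) + hammingDist x y := by
  simp only [hammingDist, Finset.card_filter, Fin.sum_univ_succ, Fin.cons_zero, Fin.cons_succ]
  by_cases h : a = b <;> simp [h]

theorem toggle_induction (b : ι → Bool) {P : (ι → Bool) → Prop} (base : P b)
    (single : ∀ i, P (toggle b i))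
    (square : ∀ x i j, i ≠ j → x i ≠ b i → x j ≠ b j →
      P (toggle x i) → P (toggle x j) → P (toggle (toggle x i) j) → P x)
    (x : ι → Bool) : P x := by
  induction hk : hammingDist x b using Nat.strong_induction_on generalizing x with
  | _ k ih =>
    match k, hk with
    | 0, hk => rwa [hammingDist_eq_zero.1 hk]
    | 1, hk =>
      obtain ⟨i, rfl⟩ := hammingDist_eq_one_iff.1 ((hammingDist_comm b x).trans hk)
      exact single i
    | k + 2, hk =>
      obtain ⟨i, hi, j, hj, hij⟩ := Finset.one_lt_card.1 (show 1 < hammingDist x b by omega)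
      simp only [Finset.mem_filter_univ] at hi hj
      have := hammingDist_toggle_of_ne hi
      have := hammingDist_toggle_of_ne hj
      have := hammingDist_toggle_toggle_of_ne hij hi hj
      exact square x i j hij hi hj (ih _ (by omega) _ rfl) (ih _ (by omega) _ rfl)
        (ih _ (by omega) _ rfl)

end Cube

lemma cubeGraph_adj_iff {n : ℕ} {x y : Fin n → Bool} :
    (cubeGraph n).Adj x y ↔ hammingDist x y = 1 :=
  Fintype.existsUnique_iff_card_one _

lemma cubeGraph_adj_toggle {n : ℕ} (x : Fin n → Bool) (i : Fin n) :
    (cubeGraph n).Adj (toggle x i) x :=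
  cubeGraph_adj_iff.2 (hammingDist_toggle_left x i)

def cubeGraph.translate {n : ℕ} (t : Fin n → Bool) : cubeGraph n ≃g cubeGraph n where
  toEquiv := Equiv.addRight t
  map_rel_iff' := by
    simp only [Equiv.coe_addRight, cubeGraph_adj_iff, hammingDist_add_right, implies_true]

@[simp]
lemma cubeGraph.translate_apply {n : ℕ} (t x : Fin n → Bool) :
    cubeGraph.translate t x = x + t :=
  rfl

namespace SimpleGraph

open Finset

variable {G : SimpleGraph V}

lemma Connected.dist_le_hammingDist {ι : Type*} [Fintype ι] [DecidableEq ι]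
    (hc : G.Connected) {F : (ι → Bool) → V} (hF : ∀ x i, G.dist (F x) (F (toggle x i)) ≤ 1)
    (x y : ι → Bool) :
    G.dist (F x) (F y) ≤ hammingDist x y := by
  rw [hammingDist_comm]
  induction y using toggle_induction x with
  | base => simp
  | single i => simpa [hammingDist_toggle_left] using hF x i
  | square y i _ _ hi _ ih _ _ =>
    have := hammingDist_toggle_of_ne hi
    have := toggle_toggle y i ▸ hF (toggle y i) i
    have := hc.dist_triangle (u := F x) (v := F (toggle y i)) (w := F y)
    omega

lemma Embedding.adj_square {n : ℕ} (f : cubeGraph n ↪g G) (x : Fin n → Bool) {i j : Fin n}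
    (hij : i ≠ j) :
    G.Adj (f (toggle (toggle x i) j)) (f (toggle x i)) ∧
      G.Adj (f (toggle (toggle x i) j)) (f (toggle x j)) ∧
      G.Adj (f (toggle x i)) (f x) ∧ G.Adj (f (toggle x j)) (f x) ∧
      f (toggle x i) ≠ f (toggle x j) ∧ f x ≠ f (toggle (toggle x i) j) := by
  refine ⟨f.map_adj_iff.2 (cubeGraph_adj_toggle _ _), ?_,
    f.map_adj_iff.2 (cubeGraph_adj_toggle _ _), f.map_adj_iff.2 (cubeGraph_adj_toggle _ _),
    f.injective.ne fun h => ?_, f.injective.ne fun h => ?_⟩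
  · rw [toggle_comm]; exact f.map_adj_iff.2 (cubeGraph_adj_toggle _ _)
  · simpa [h, hammingDist_self] using hammingDist_toggle_toggle x hij
  · simpa [← h, hammingDist_self] using
      hammingDist_toggle_of_eq (x := toggle x i) (b := x) (i := j) (toggle_apply_of_ne x hij.symm)

lemma Connected.dist_le_dist_add_one (hc : G.Connected) {x y : V} (h : G.Adj x y) (r : V) :
    G.dist r y ≤ G.dist r x + 1 :=
  dist_eq_one_iff_adj.2 h ▸ hc.dist_triangle

lemma Connected.dist_eq_two (hc : G.Connected) {c p q : V} (hp : G.Adj c p) (hq : G.Adj c q)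
    (hne : p ≠ q) (hnadj : ¬ G.Adj p q) : G.dist p q = 2 := by
  have := hc.one_lt_dist_of_ne_of_not_adj hne hnadj
  have := hc.dist_le_dist_add_one hq p
  have := dist_eq_one_iff_adj.2 hp.symm
  omega

lemma Connected.exists_adj_dist_add_one_eq_s19 (hc : G.Connected) {z u : V} (h : u ≠ z) :
    ∃ p, G.Adj u p ∧ G.dist z p + 1 = G.dist z u := by
  obtain ⟨w, hw⟩ := hc.exists_walk_length_eq_dist u z
  cases w with
  | nil => exact absurd rfl h
  | @cons _ p _ hup w =>
    refine ⟨p, hup, ?_⟩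
    have := dist_le w
    have := hc.dist_le_dist_add_one hup.symm z
    have := dist_comm (G := G) (u := z) (v := p)
    have := dist_comm (G := G) (u := z) (v := u)
    rw [Walk.length_cons] at hw
    omega

lemma mem_gInterval {x y m : V} : m ∈ gInterval G x y ↔ G.dist x m + G.dist m y = G.dist x y :=
  Iff.rfl

lemma mem_gInterval_of_adj {x y m : V} (hc : G.Connected) (h : G.Adj x y)
    (hm : m ∈ gInterval G x y) : m = x ∨ m = y := by
  rw [mem_gInterval, dist_eq_one_iff_adj.2 h] at hm
  rcases Nat.add_eq_one_iff.1 hm with ⟨h0, -⟩ | ⟨-, h0⟩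
  · exact Or.inl (hc.dist_eq_zero_iff.1 h0).symm
  · exact Or.inr (hc.dist_eq_zero_iff.1 h0)

def IsMedianOf (G : SimpleGraph V) (a b c m : V) : Prop :=
  m ∈ gInterval G a b ∧ m ∈ gInterval G b c ∧ m ∈ gInterval G c a

def IsMedian (G : SimpleGraph V) : Prop :=
  ∀ a b c : V, ∃! m, G.IsMedianOf a b c m

namespace IsMedian

variable (hmed : G.IsMedian) (hc : G.Connected)
include hmed hc

lemma dist_eq_add_one_or {x y : V} (h : G.Adj x y) (r : V) :
    G.dist r y = G.dist r x + 1 ∨ G.dist r x = G.dist r y + 1 := by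
  obtain ⟨m, ⟨hrx, hxy, hyr⟩, -⟩ := hmed r x y
  rcases mem_gInterval_of_adj hc h hxy with rfl | rfl
  · rw [mem_gInterval, dist_eq_one_iff_adj.2 h.symm, dist_comm (u := m), dist_comm (u := y)] at hyr
    omega
  · rw [mem_gInterval, dist_eq_one_iff_adj.2 h.symm] at hrx
    omega

lemma not_adj_of_dist_eq {r x y : V} (h : G.dist r x = G.dist r y) : ¬ G.Adj x y := fun hxy => by
  rcases hmed.dist_eq_add_one_or hc hxy r with h' | h' <;> omega

/-- Both `a` and `b` are medians of `r, p, q`. -/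
lemma eq_of_adj_of_adj {r p q a b : V} (hne : p ≠ q) (hr : G.dist r p = G.dist r q)
    (hpa : G.Adj p a) (hqa : G.Adj q a) (hpb : G.Adj p b) (hqb : G.Adj q b)
    (ha : G.dist r a + 1 = G.dist r p) (hb : G.dist r b + 1 = G.dist r p) : a = b := by
  have hpq := hc.dist_eq_two hpa.symm hqa.symm hne (hmed.not_adj_of_dist_eq hc hr)
  have hmedian : ∀ c, G.Adj p c → G.Adj q c → G.dist r c + 1 = G.dist r p →
      G.IsMedianOf r p q c := by
    intro c hpc hqc hc'
    have := dist_eq_one_iff_adj.2 hpc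
    have := dist_eq_one_iff_adj.2 hqc
    have := dist_eq_one_iff_adj.2 hpc.symm
    have := dist_eq_one_iff_adj.2 hqc.symm
    have := dist_comm (G := G) (u := c) (v := r)
    have := dist_comm (G := G) (u := q) (v := r)
    refine ⟨?_, ?_, ?_⟩ <;> rw [mem_gInterval] <;> omega
  exact (hmed r p q).unique (hmedian a hpa hqa ha) (hmedian b hpb hqb hb)

omit hc in
/-- The median of `r, p, q` is a common neighbour of `p` and `q`. -/
lemma exists_adj_adj {r p q : V} (hpq : G.dist p q = 2) (hr : G.dist r p = G.dist r q) :
    ∃ m, G.Adj p m ∧ G.Adj q m ∧ G.dist r m + 1 = G.dist r p := by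
  obtain ⟨m, ⟨hrp, hpq', hqr⟩, -⟩ := hmed r p q
  simp only [mem_gInterval] at hrp hpq' hqr
  have := dist_comm (G := G) (u := q) (v := r)
  have := dist_comm (G := G) (u := m) (v := r)
  have := dist_comm (G := G) (u := q) (v := m)
  have := dist_comm (G := G) (u := m) (v := p)
  refine ⟨m, dist_eq_one_iff_adj.1 (by omega), dist_eq_one_iff_adj.1 (by omega), by omega⟩

lemma dist_opposite_of_nearest {r t p q v : V} (htp : G.Adj t p) (htq : G.Adj t q)
    (hpv : G.Adj p v) (hqv : G.Adj q v) (hpq : p ≠ q) (hvt : v ≠ t)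
    (hp : G.dist r p = G.dist r t + 1) (hq : G.dist r q = G.dist r t + 1) :
    G.dist r v = G.dist r t + 2 := by
  rcases hmed.dist_eq_add_one_or hc hpv r with h | h
  · omega
  · exact absurd (hmed.eq_of_adj_of_adj hc (r := r) hpq (by omega) hpv hqv htp.symm htq.symm
      (by omega) (by omega)) hvt

lemma dist_opposite_of_farthest {r u p q v : V} (hup : G.Adj u p) (huq : G.Adj u q)
    (hpv : G.Adj p v) (hqv : G.Adj q v) (hpq : p ≠ q) (hvu : v ≠ u)
    (hp : G.dist r p + 1 = G.dist r u) (hq : G.dist r q + 1 = G.dist r u) :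
    G.dist r v + 2 = G.dist r u := by
  rcases hmed.dist_eq_add_one_or hc hpv r with h | h
  · -- then `p` and `q` would both be medians of `u`, `v` and the bottom corner `m`
    exfalso
    have hpq2 := hc.dist_eq_two hup huq hpq (hmed.not_adj_of_dist_eq hc (r := r) (by omega))
    obtain ⟨m, hpm, hqm, hm⟩ := hmed.exists_adj_adj (r := r) hpq2 (by omega)
    have huv := hc.dist_eq_two hup.symm hpv hvu.symm
      (hmed.not_adj_of_dist_eq hc (r := r) (by omega))
    have hum := hc.dist_eq_two hup.symm hpm (by rintro rfl; omega) fun h' => by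
      rcases hmed.dist_eq_add_one_or hc h' r with h'' | h'' <;> omega
    exact hpq (hmed.eq_of_adj_of_adj hc (r := u) (by rintro rfl; omega) (huv.trans hum.symm)
      hpv.symm hpm.symm hqv.symm hqm.symm (by rw [dist_eq_one_iff_adj.2 hup, huv])
      (by rw [dist_eq_one_iff_adj.2 huq, huv]))
  · omega

end IsMedian

def IsDownward (G : SimpleGraph V) (z : V) {ι : Type*} [Fintype ι] (F : (ι → Bool) → V) :
    Prop :=
  ∀ x, G.dist z (F x) + hammingDist x 0 = G.dist z (F 0)

def cubeEmbeddingOfIsometry {n : ℕ} {F : (Fin n → Bool) → V}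
    (hF : ∀ x y, G.dist (F x) (F y) = hammingDist x y) : cubeGraph n ↪g G where
  toFun := F
  inj' x y h := hammingDist_eq_zero.1 (by rw [← hF, h, dist_self])
  map_rel_iff' {x y} := by
    change G.Adj (F x) (F y) ↔ _
    rw [← dist_eq_one_iff_adj, hF, cubeGraph_adj_iff]

@[simp]
lemma coe_cubeEmbeddingOfIsometry {n : ℕ} {F : (Fin n → Bool) → V}
    (hF : ∀ x y, G.dist (F x) (F y) = hammingDist x y) : ⇑(cubeEmbeddingOfIsometry hF) = F :=
  rfl

namespace IsMedian

variable (hmed : G.IsMedian) (hc : G.Connected) {z : V} {n : ℕ} {f : cubeGraph n ↪g G}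
  (hf : ∀ x y, G.dist (f x) (f y) = hammingDist x y) (hfz : G.IsDownward z f)
  {w : V} (hw : G.Adj (f 0) w) (hwz : G.dist z w + 1 = G.dist z (f 0))
  (hwf : ∀ i, f (toggle 0 i) ≠ w) {M : (Fin n → Bool) → V}
  (hM : ∀ x, G.IsMedianOf z (f x) w (M x))

include hmed hc hfz hw hwz hwf

lemma dist_new_apply (x : Fin n → Bool) : G.dist w (f x) = hammingDist x 0 + 1 := by
  induction x using toggle_induction (0 : Fin n → Bool) with
  | base => simpa using dist_eq_one_iff_adj.2 hw.symm
  | single i =>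
    have hi := hfz (toggle 0 i)
    rw [hammingDist_toggle_left] at hi ⊢
    exact hc.dist_eq_two hw (f.map_adj_iff.2 (cubeGraph_adj_toggle 0 i)).symm (hwf i).symm
      (hmed.not_adj_of_dist_eq hc (r := z) (by omega))
  | square x i j hij hi hj ih1 ih2 ih12 =>
    obtain ⟨h1, h2, h3, h4, hne, hne'⟩ := f.adj_square x hij
    have := hammingDist_toggle_of_ne hi
    have := hammingDist_toggle_of_ne hj
    have := hammingDist_toggle_toggle_of_ne hij hi hj
    have := hmed.dist_opposite_of_nearest hc (r := w) h1 h2 h3 h4 hne hne' (by omega) (by omega)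
    omega

include hM

lemma median_dist_spec (x : Fin n → Bool) :
    G.dist (f x) (M x) = 1 ∧ G.dist (M x) w = hammingDist x 0 ∧
      G.dist z (M x) + hammingDist x 0 + 1 = G.dist z (f 0) := by
  obtain ⟨h1, h2, h3⟩ := hM x
  rw [mem_gInterval] at h1 h2 h3
  have := hmed.dist_new_apply hc hfz hw hwz hwf x
  have := hfz x
  have := dist_comm (G := G) (u := M x) (v := f x)
  have := dist_comm (G := G) (u := w) (v := M x)
  have := dist_comm (G := G) (u := M x) (v := z)
  have := dist_comm (G := G) (u := w) (v := z)
  have := dist_comm (G := G) (u := f x) (v := w)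
  omega

include hf in
lemma dist_median_apply (x y : Fin n → Bool) :
    G.dist (M x) (f y) = hammingDist y x + 1 := by
  obtain ⟨hxM, hMw, hzM⟩ := hmed.median_dist_spec hc hfz hw hwz hwf hM x
  induction y using toggle_induction x with
  | base => rw [dist_comm, hxM, hammingDist_self]
  | single i =>
    have := hc.dist_triangle (u := M x) (v := f x) (w := f (toggle x i))
    have := hf (toggle x i) x
    have := hammingDist_toggle_left x i
    have := dist_comm (G := G) (u := M x) (v := f x)
    have := dist_comm (G := G) (u := f x) (v := f (toggle x i))
    rw [hammingDist_toggle_left]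
    by_cases hxi : x i = (0 : Fin n → Bool) i
    · have := hammingDist_toggle_of_eq hxi
      have := hmed.dist_new_apply hc hfz hw hwz hwf (toggle x i)
      have := hc.dist_triangle (u := w) (v := M x) (w := f (toggle x i))
      have := dist_comm (G := G) (u := w) (v := M x)
      omega
    · have := hammingDist_toggle_of_ne hxi
      have := hfz (toggle x i)
      have := hc.dist_triangle (u := z) (v := M x) (w := f (toggle x i))
      omega
  | square y i j hij hi hj ih1 ih2 ih12 =>
    obtain ⟨h1, h2, h3, h4, hne, hne'⟩ := f.adj_square y hij
    have := hammingDist_toggle_of_ne hi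
    have := hammingDist_toggle_of_ne hj
    have := hammingDist_toggle_toggle_of_ne hij hi hj
    have := hmed.dist_opposite_of_nearest hc (r := M x) h1 h2 h3 h4 hne hne' (by omega)
      (by omega)
    omega

include hf

/-- Going one step down from `f x` both along the cube and towards `w` closes a square whose
fourth corner is the next median. -/
lemma adj_median_toggle {x : Fin n → Bool} {i : Fin n} (hxi : x i = (0 : Fin n → Bool) i) :
    G.Adj (M x) (M (toggle x i)) := by
  obtain ⟨hxM, hMw, hzM⟩ := hmed.median_dist_spec hc hfz hw hwz hwf hM x
  have hy := hammingDist_toggle_of_eq hxi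
  have hMy := hmed.dist_median_apply hc hf hfz hw hwz hwf hM x (toggle x i)
  rw [hammingDist_toggle_left] at hMy
  have hyw := hmed.dist_new_apply hc hfz hw hwz hwf (toggle x i)
  have hzy := hfz (toggle x i)
  obtain ⟨m, hMm, hym, hzm⟩ := hmed.exists_adj_adj (r := z) hMy (by omega)
  suffices hm : G.IsMedianOf z (f (toggle x i)) w m from
    (hmed z (f (toggle x i)) w).unique hm (hM (toggle x i)) ▸ hMm
  have := dist_eq_one_iff_adj.2 hym
  have := dist_eq_one_iff_adj.2 hym.symm
  have := dist_eq_one_iff_adj.2 hMm.symm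
  have := hc.dist_triangle (u := m) (v := M x) (w := w)
  have := hc.dist_triangle (u := f (toggle x i)) (v := m) (w := w)
  have := dist_comm (G := G) (u := w) (v := f (toggle x i))
  have := dist_comm (G := G) (u := w) (v := m)
  have := dist_comm (G := G) (u := m) (v := z)
  have := dist_comm (G := G) (u := w) (v := z)
  refine ⟨?_, ?_, ?_⟩ <;> rw [mem_gInterval] <;> omega

lemma dist_median_median (x y : Fin n → Bool) :
    G.dist (M x) (M y) = hammingDist x y := by
  have hle : G.dist (M x) (M y) ≤ hammingDist x y := by
    refine hc.dist_le_hammingDist (F := M) (fun x i => ?_) x y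
    by_cases hxi : x i = (0 : Fin n → Bool) i
    · exact (dist_eq_one_iff_adj.2 (hmed.adj_median_toggle hc hf hfz hw hwz hwf hM hxi)).le
    · have := hmed.adj_median_toggle hc hf hfz hw hwz hwf hM
        ((toggle_apply_self_eq_iff x 0 i).2 hxi)
      rw [toggle_toggle] at this
      exact (dist_eq_one_iff_adj.2 this.symm).le
  have hMf := hmed.dist_median_apply hc hf hfz hw hwz hwf hM x y
  have := hc.dist_triangle (u := M x) (v := M y) (w := f y)
  have := (hmed.median_dist_spec hc hfz hw hwz hwf hM y).1
  have := dist_comm (G := G) (u := M y) (v := f y)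
  rw [hammingDist_comm] at hMf
  omega

end IsMedian

/-- The new layer consists of the medians of `z`, `f x` and `w`. -/
lemma IsMedian.exists_extension (hmed : G.IsMedian) (hc : G.Connected) {z : V} {n : ℕ}
    {f : cubeGraph n ↪g G} (hf : ∀ x y, G.dist (f x) (f y) = hammingDist x y)
    (hfz : G.IsDownward z f) {w : V} (hw : G.Adj (f 0) w)
    (hwz : G.dist z w + 1 = G.dist z (f 0)) (hwf : ∀ i, f (toggle 0 i) ≠ w) :
    ∃ g : cubeGraph (n + 1) ↪g G, (∀ x y, G.dist (g x) (g y) = hammingDist x y) ∧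
      G.IsDownward z g ∧ g 0 = f 0 ∧ g (toggle 0 0) = w ∧
      ∀ i, g (toggle 0 i.succ) = f (toggle 0 i) := by
  choose M hM using fun x => (hmed z (f x) w).exists
  have hM0 : M 0 = w := (hmed z (f 0) w).unique (hM 0) <| by
    have := dist_eq_one_iff_adj.2 hw.symm
    refine ⟨?_, ?_, ?_⟩ <;> rw [mem_gInterval] <;> simp [this, hwz, dist_comm (u := w)]
  let F : (Fin (n + 1) → Bool) → V := fun p => if p 0 then M (Fin.tail p) else f (Fin.tail p)
  have hF : ∀ a x, F (Fin.cons a x) = if a then M x else f x := fun a x => by simp [F]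
  have h0 : (0 : Fin (n + 1) → Bool) = Fin.cons false 0 := by
    ext k; exact Fin.cases rfl (fun _ => rfl) k
  have hdist : ∀ p q, G.dist (F p) (F q) = hammingDist p q := by
    intro p q
    induction p using Fin.consCases with | cons a x => ?_
    induction q using Fin.consCases with | cons b y => ?_
    rw [hF, hF, hammingDist_cons]
    have := hmed.dist_median_apply hc hf hfz hw hwz hwf hM x y
    have := hmed.dist_median_apply hc hf hfz hw hwz hwf hM y x
    have := hmed.dist_median_median hc hf hfz hw hwz hwf hM x y
    have := hf x y
    have := hammingDist_comm x y
    have := dist_comm (G := G) (u := f x) (v := M y)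
    cases a <;> cases b <;> simp <;> omega
  refine ⟨cubeEmbeddingOfIsometry hdist, hdist, fun p => ?_, ?_, ?_, fun i => ?_⟩
  · induction p using Fin.consCases with | cons a x => ?_
    have := hfz x
    have := (hmed.median_dist_spec hc hfz hw hwz hwf hM x).2.2
    simp only [coe_cubeEmbeddingOfIsometry, h0, hF, hammingDist_cons]
    cases a <;> simp [-hammingDist_zero_right] <;> omega
  · simp [h0, hF]
  · simp [h0, toggle_zero_cons, hF, hM0]
  · simp [h0, toggle_succ_cons, hF]

theorem IsMedian.exists_cube (hmed : G.IsMedian) (hc : G.Connected) (z u : V) {n : ℕ}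
    (e : Fin n → V) (he : e.Injective)
    (hdown : ∀ i, G.Adj u (e i) ∧ G.dist z (e i) + 1 = G.dist z u) :
    ∃ f : cubeGraph n ↪g G, (∀ x y, G.dist (f x) (f y) = hammingDist x y) ∧
      G.IsDownward z f ∧ f 0 = u ∧ ∀ i, f (toggle 0 i) = e i := by
  induction n with
  | zero =>
    have hF : ∀ x y : Fin 0 → Bool, G.dist u u = hammingDist x y := fun x y => by
      simp [Subsingleton.elim x y]
    refine ⟨cubeEmbeddingOfIsometry (F := fun _ => u) hF, hF, fun x => ?_, rfl,
      fun i => i.elim0⟩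
    simp [Subsingleton.elim x 0]
  | succ n ih =>
    obtain ⟨f, hf, hfz, hf0, hfe⟩ := ih (fun i => e i.succ) (he.comp (Fin.succ_injective n))
      fun i => hdown i.succ
    obtain ⟨g, hg, hgz, hg0, hge0, hge⟩ := hmed.exists_extension hc hf hfz (w := e 0)
      (hf0 ▸ (hdown 0).1) (hf0 ▸ (hdown 0).2)
      fun i => hfe i ▸ he.ne (Fin.succ_ne_zero i)
    refine ⟨g, hg, hgz, hg0.trans hf0, fun i => ?_⟩
    induction i using Fin.cases with
    | zero => exact hge0
    | succ i => exact (hge i).trans (hfe i)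

lemma IsDownward.eq_zero_of_le {z : V} {ι : Type*} [Fintype ι] {F : (ι → Bool) → V}
    (hF : G.IsDownward z F) {x : ι → Bool} (h : G.dist z (F 0) ≤ G.dist z (F x)) : x = 0 :=
  hammingDist_eq_zero.1 (by have := hF x; omega)

lemma IsDownward.exists_eq_toggle_of_adj {z : V} {n : ℕ} {f : cubeGraph n ↪g G}
    (hf : G.IsDownward z f) {c a : Fin n → Bool} (hadj : G.Adj (f c) (f a))
    (hlev : G.dist z (f a) + 1 = G.dist z (f c)) :
    ∃ k, c k = (0 : Fin n → Bool) k ∧ a = toggle c k := by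
  obtain ⟨k, rfl⟩ := hammingDist_eq_one_iff.1 (cubeGraph_adj_iff.1 (f.map_adj_iff.1 hadj))
  refine ⟨k, by_contra fun hk => ?_, rfl⟩
  have := hammingDist_toggle_of_ne hk
  have := hf c
  have := hf (toggle c k)
  omega

lemma IsDownward.exists_adj_adj {z : V} {n : ℕ} {f : cubeGraph n ↪g G}
    (hf : G.IsDownward z f) {c a b : Fin n → Bool} (hca : G.Adj (f c) (f a))
    (hcb : G.Adj (f c) (f b)) (hab : f a ≠ f b) (ha : G.dist z (f a) + 1 = G.dist z (f c))
    (hb : G.dist z (f b) + 1 = G.dist z (f c)) :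
    ∃ d, G.Adj (f a) (f d) ∧ G.Adj (f b) (f d) ∧ G.dist z (f d) + 1 = G.dist z (f a) := by
  obtain ⟨k, hk, rfl⟩ := hf.exists_eq_toggle_of_adj hca ha
  obtain ⟨l, hl, rfl⟩ := hf.exists_eq_toggle_of_adj hcb hb
  have hkl : k ≠ l := by rintro rfl; exact hab rfl
  have hl' : toggle c k l = (0 : Fin n → Bool) l := by rwa [toggle_apply_of_ne c hkl.symm]
  refine ⟨toggle (toggle c k) l, (f.map_adj_iff.2 (cubeGraph_adj_toggle _ l)).symm, ?_, ?_⟩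
  · rw [toggle_comm]; exact (f.map_adj_iff.2 (cubeGraph_adj_toggle _ k)).symm
  · have := hammingDist_toggle_of_eq hk
    have := hammingDist_toggle_of_eq hl'
    have := hf (toggle c k)
    have := hf (toggle (toggle c k) l)
    omega

namespace IsMedian

variable (hmed : G.IsMedian) (hc : G.Connected) {n : ℕ}
include hmed hc

lemma isDownward_of_forall_le {z : V} {f : cubeGraph n ↪g G}
    (hmax : ∀ x, G.dist z (f x) ≤ G.dist z (f 0)) : G.IsDownward z f := by
  intro x
  induction x using toggle_induction (0 : Fin n → Bool) with
  | base => simp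
  | single i =>
    rw [hammingDist_toggle_left]
    have := hmax (toggle 0 i)
    rcases hmed.dist_eq_add_one_or hc (f.map_adj_iff.2 (cubeGraph_adj_toggle 0 i)) z with h | h <;>
      omega
  | square x i j hij hi hj ih1 ih2 ih12 =>
    obtain ⟨h1, h2, h3, h4, hne, hne'⟩ := f.adj_square x hij
    have := hammingDist_toggle_of_ne hi
    have := hammingDist_toggle_of_ne hj
    have := hammingDist_toggle_toggle_of_ne hij hi hj
    have := hmed.dist_opposite_of_farthest hc (r := z) h1 h2 h3 h4 hne hne' (by omega) (by omega)
    omega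

lemma exists_isDownward_of_iso (z : V) {s : Set V} (φ : G.induce s ≃g cubeGraph n) :
    ∃ f : cubeGraph n ↪g G, G.IsDownward z f ∧ Set.range f = s := by
  let f₀ : cubeGraph n ↪g G := (Embedding.induce s).comp φ.symm.toEmbedding
  obtain ⟨t, ht⟩ := Finite.exists_max fun x => G.dist z (f₀ x)
  let f : cubeGraph n ↪g G := f₀.comp (cubeGraph.translate t).toEmbedding
  refine ⟨f, hmed.isDownward_of_forall_le hc fun x => ?_, ?_⟩
  · simpa [f] using ht (x + t)
  · exact ((cubeGraph.translate t).surjective.range_comp _).trans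
      ((φ.symm.surjective.range_comp _).trans Subtype.range_coe)

/-- Below the neighbours of the apex, every vertex of `g` is the unique common lower neighbour of
two vertices one level up, and the matching square of `f` supplies such a neighbour. -/
lemma range_subset_of_isDownward {z : V} {f g : cubeGraph n ↪g G} (hf : G.IsDownward z f)
    (hg : G.IsDownward z g) (h0 : g 0 = f 0) (hunit : ∀ i, g (toggle 0 i) ∈ Set.range f) :
    Set.range g ⊆ Set.range f := by
  rintro _ ⟨x, rfl⟩
  induction x using toggle_induction (0 : Fin n → Bool) with
  | base => exact ⟨0, h0.symm⟩
  | single i => exact hunit i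
  | square x i j hij hi hj ih1 ih2 ih12 =>
    obtain ⟨a, ha⟩ := ih1
    obtain ⟨b, hb⟩ := ih2
    obtain ⟨c, hc'⟩ := ih12
    obtain ⟨h1, h2, h3, h4, hne, -⟩ := g.adj_square x hij
    have := hammingDist_toggle_of_ne hi
    have := hammingDist_toggle_of_ne hj
    have := hammingDist_toggle_toggle_of_ne hij hi hj
    have := hg x
    have := hg (toggle x i)
    have := hg (toggle x j)
    have := hg (toggle (toggle x i) j)
    rw [← ha, ← hb, ← hc'] at *
    obtain ⟨d, hda, hdb, hd⟩ := hf.exists_adj_adj h1 h2 hne (by omega) (by omega)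
    exact ⟨d, hmed.eq_of_adj_of_adj hc (r := z) hne (by omega) hda hdb h3 h4 hd (by omega)⟩

end IsMedian

def IsFarthest (G : SimpleGraph V) (z : V) (s : Finset V) (u : V) : Prop :=
  u ∈ s ∧ ∀ v ∈ s, G.dist z v ≤ G.dist z u

lemma IsDownward.isFarthest_iff [DecidableEq V] {z : V} {n : ℕ} {f : cubeGraph n ↪g G}
    (hf : G.IsDownward z f) {u : V} : G.IsFarthest z (Finset.univ.image f) u ↔ u = f 0 := by
  simp only [IsFarthest, Finset.mem_image, Finset.mem_univ, true_and, forall_exists_index,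
    forall_apply_eq_imp_iff]
  constructor
  · rintro ⟨⟨x, rfl⟩, hmax⟩
    rw [hf.eq_zero_of_le (hmax 0)]
  · rintro rfl
    exact ⟨⟨0, rfl⟩, fun x => by have := hf x; omega⟩

lemma Embedding.filter_adj_eq_image_toggle [DecidableRel G.Adj] [DecidableEq V] {n : ℕ}
    (f : cubeGraph n ↪g G) :
    (Finset.univ.image f).filter (G.Adj (f 0)) = Finset.univ.image fun i => f (toggle 0 i) := by
  ext v
  simp only [Finset.mem_filter, Finset.mem_image, Finset.mem_univ, true_and]
  constructor
  · rintro ⟨⟨x, rfl⟩, hadj⟩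
    obtain ⟨i, rfl⟩ := hammingDist_eq_one_iff.1 (cubeGraph_adj_iff.1 (f.map_adj_iff.1 hadj))
    exact ⟨i, rfl⟩
  · rintro ⟨i, rfl⟩
    exact ⟨⟨_, rfl⟩, (f.map_adj_iff.2 (cubeGraph_adj_toggle 0 i)).symm⟩

def IsCube (G : SimpleGraph V) (n : ℕ) (s : Finset V) : Prop :=
  Nonempty (G.induce (s : Set V) ≃g cubeGraph n)

open Classical in
noncomputable def downNeighbors (G : SimpleGraph V) [Fintype V] (z u : V) : Finset V :=
  {w | G.Adj u w ∧ G.dist z w + 1 = G.dist z u}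

lemma Connected.downNeighbors_eq_empty_iff (hc : G.Connected) [Fintype V] {z u : V} :
    G.downNeighbors z u = ∅ ↔ u = z := by
  constructor
  · intro h
    by_contra hne
    obtain ⟨p, hp, hpz⟩ := hc.exists_adj_dist_add_one_eq_s19 hne
    have : p ∈ G.downNeighbors z u := by simp [downNeighbors, hp, hpz]
    simp [h] at this
  · rintro rfl
    ext w
    simp [downNeighbors]

lemma isCube_image [DecidableEq V] {n : ℕ} (f : cubeGraph n ↪g G) :
    G.IsCube n (Finset.univ.image f) := by
  have : ((Finset.univ.image f : Finset V) : Set V) = Set.range f := by simp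
  rw [IsCube, this]
  exact ⟨f.isoInduceRange.symm⟩

namespace IsMedian

variable (hmed : G.IsMedian) (hc : G.Connected)
include hmed hc

lemma exists_of_isCube [DecidableEq V] (z : V) {n : ℕ} {s : Finset V} (hs : G.IsCube n s) :
    ∃ f : cubeGraph n ↪g G, G.IsDownward z f ∧ s = Finset.univ.image f := by
  obtain ⟨φ⟩ := hs
  obtain ⟨f, hf, hrange⟩ := hmed.exists_isDownward_of_iso hc z φ
  exact ⟨f, hf, Finset.coe_injective (by simp [hrange])⟩

lemma subset_of_filter_adj_subset [DecidableEq V] [DecidableRel G.Adj] {z : V} {n : ℕ}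
    {s t : Finset V} (hs : G.IsCube n s) (ht : G.IsCube n t) {u : V} (hsu : G.IsFarthest z s u)
    (htu : G.IsFarthest z t u) (h : t.filter (G.Adj u) ⊆ s.filter (G.Adj u)) : t ⊆ s := by
  obtain ⟨f, hf, rfl⟩ := hmed.exists_of_isCube hc z hs
  obtain ⟨g, hg, rfl⟩ := hmed.exists_of_isCube hc z ht
  obtain rfl := hf.isFarthest_iff.1 hsu
  have hg0 := (hg.isFarthest_iff.1 htu).symm
  have hgf := g.filter_adj_eq_image_toggle
  rw [hg0] at hgf
  rw [hgf, f.filter_adj_eq_image_toggle] at h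
  have hunit : ∀ i, g (toggle 0 i) ∈ Set.range f := fun i => by
    obtain ⟨j, -, hj⟩ := Finset.mem_image.1 (h (Finset.mem_image_of_mem _ (Finset.mem_univ i)))
    exact ⟨_, hj⟩
  intro v hv
  obtain ⟨x, -, rfl⟩ := Finset.mem_image.1 hv
  obtain ⟨y, hy⟩ := hmed.range_subset_of_isDownward hc hf hg hg0 hunit ⟨x, rfl⟩
  exact Finset.mem_image.2 ⟨y, Finset.mem_univ y, hy⟩

lemma exists_isCube_filter_adj_eq [Fintype V] [DecidableEq V] [DecidableRel G.Adj] {z u : V}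
    {n : ℕ} {S : Finset V} (hSD : S ⊆ G.downNeighbors z u) (hS : #S = n) :
    ∃ s, (G.IsCube n s ∧ G.IsFarthest z s u) ∧ s.filter (G.Adj u) = S := by
  let e : Fin n ≃ S := (Fintype.equivFinOfCardEq (by simpa using hS)).symm
  obtain ⟨f, -, hf, hf0, hfe⟩ := hmed.exists_cube hc z u (fun i => (e i : V))
    (Subtype.val_injective.comp e.injective) fun i => by
      simpa [downNeighbors] using hSD (e i).2
  refine ⟨Finset.univ.image f, ⟨isCube_image f, hf.isFarthest_iff.2 hf0.symm⟩, ?_⟩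
  rw [← hf0, f.filter_adj_eq_image_toggle]
  ext v
  simp only [hfe, Finset.mem_image, Finset.mem_univ, true_and]
  exact ⟨fun ⟨i, hi⟩ => hi ▸ (e i).2, fun hv => ⟨e.symm ⟨v, hv⟩, by simp⟩⟩

open Classical in
/-- Cubes with apex `u` correspond to their sets of edges at `u`, which are exactly the
`n`-subsets of the lower neighbours of `u`. -/
lemma card_isFarthest [Fintype V] (z u : V) (n : ℕ) :
    #{s : Finset V | G.IsCube n s ∧ G.IsFarthest z s u} = (#(G.downNeighbors z u)).choose n := by
  classical
  rw [← Finset.card_powersetCard]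
  refine Finset.card_nbij (fun s => s.filter (G.Adj u)) (fun s hs => ?_)
    (fun s hs t ht hst => ?_) (fun S hS => ?_)
  · obtain ⟨hcube, hu⟩ := Finset.mem_filter.1 hs |>.2
    obtain ⟨f, hf, rfl⟩ := hmed.exists_of_isCube hc z hcube
    obtain rfl := hf.isFarthest_iff.1 hu
    beta_reduce
    rw [f.filter_adj_eq_image_toggle, Finset.mem_coe, Finset.mem_powersetCard,
      Finset.card_image_of_injective (f := fun i => f (toggle 0 i)) _
        (f.injective.comp (toggle_injective 0)), Finset.card_univ, Fintype.card_fin]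
    refine ⟨fun v hv => ?_, rfl⟩
    obtain ⟨i, -, rfl⟩ := Finset.mem_image.1 hv
    have := hf (toggle 0 i)
    rw [hammingDist_toggle_left] at this
    simpa [downNeighbors, this] using (f.map_adj_iff.2 (cubeGraph_adj_toggle 0 i)).symm
  · obtain ⟨hs, hsu⟩ := (Finset.mem_filter.1 hs).2
    obtain ⟨ht, htu⟩ := (Finset.mem_filter.1 ht).2
    exact (hmed.subset_of_filter_adj_subset hc ht hs htu hsu hst.le).antisymm
      (hmed.subset_of_filter_adj_subset hc hs ht hsu htu hst.ge)
  · obtain ⟨s, hs, hsS⟩ := hmed.exists_isCube_filter_adj_eq hc (Finset.mem_powersetCard.1 hS).1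
      (Finset.mem_powersetCard.1 hS).2
    exact ⟨s, Finset.mem_filter.2 ⟨Finset.mem_univ _, hs⟩, hsS⟩

lemma numCubes_eq_sum_choose [Fintype V] (z : V) (n : ℕ) :
    numCubes G n = ∑ u, (#(G.downNeighbors z u)).choose n := by
  classical
  have hunique : ∀ s, G.IsCube n s → #{u | G.IsFarthest z s u} = 1 := by
    intro s hs
    obtain ⟨f, hf, rfl⟩ := hmed.exists_of_isCube hc z hs
    exact Finset.card_eq_one.2 ⟨f 0, by ext u; simp [hf.isFarthest_iff]⟩
  calc numCubes G n = #{s : Finset V | G.IsCube n s} := by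
        rw [numCubes, Nat.card_eq_fintype_card, Fintype.card_subtype]; rfl
    _ = ∑ s ∈ {s : Finset V | G.IsCube n s}, #{u | G.IsFarthest z s u} := by
        rw [Finset.card_eq_sum_ones]
        exact Finset.sum_congr rfl fun s hs => (hunique s (Finset.mem_filter.1 hs).2).symm
    _ = ∑ u, #{s ∈ {s : Finset V | G.IsCube n s} | G.IsFarthest z s u} :=
        Finset.sum_card_bipartiteAbove_eq_sum_card_bipartiteBelow _
    _ = ∑ u, #{s : Finset V | G.IsCube n s ∧ G.IsFarthest z s u} := by
        simp only [Finset.filter_filter]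
    _ = _ := Finset.sum_congr rfl fun u _ => by convert hmed.card_isFarthest hc z u n

end IsMedian

end SimpleGraph

lemma Int.alternating_sum_range_choose_of_le {m N : ℕ} (h : m ≤ N) :
    ∑ k ∈ Finset.range (N + 1), (-1 : ℤ) ^ k * m.choose k = if m = 0 then 1 else 0 := by
  rw [← Int.alternating_sum_range_choose]
  refine (Finset.sum_subset (Finset.range_subset_range.2 (by omega)) fun k _ hk => ?_).symm
  rw [Nat.choose_eq_zero_of_lt (by simpa using hk)]
  simp

/-- Euler formula for finite median graphs: the alternating sum of the numbers
of `n`-cubes equals 1. -/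
theorem stmt_19 (G : SimpleGraph V) [Fintype V] (hconn : G.Connected)
    (hmed : ∀ u v w : V, ∃! m : V,
        m ∈ gInterval G u v ∧ m ∈ gInterval G v w ∧ m ∈ gInterval G w u) :
    ∑ n ∈ Finset.range (Fintype.card V + 1),
        (-1 : ℤ) ^ n * (numCubes G n : ℤ) = 1 := by
  classical
  obtain ⟨z⟩ := hconn.nonempty
  have hmed : G.IsMedian := hmed
  calc ∑ n ∈ Finset.range (Fintype.card V + 1), (-1 : ℤ) ^ n * (numCubes G n : ℤ)
      = ∑ u, ∑ n ∈ Finset.range (Fintype.card V + 1),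
          (-1 : ℤ) ^ n * ((G.downNeighbors z u).card.choose n : ℤ) := by
        simp_rw [hmed.numCubes_eq_sum_choose hconn z, Nat.cast_sum, Finset.mul_sum]
        exact Finset.sum_comm
    _ = ∑ u, if u = z then 1 else 0 := by
        refine Finset.sum_congr rfl fun u _ => ?_
        rw [Int.alternating_sum_range_choose_of_le (Finset.card_le_univ _)]
        exact if_congr (Finset.card_eq_zero.trans hconn.downNeighbors_eq_empty_iff) rfl rfl
    _ = 1 := by simp
end
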